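/- Eckart–Young theorem (Frobenius norm): for any real matrix X with singular value decomposition X = ΨΣVᵀ, the truncated SVD X_r = Ψ_r Σ_r V_rᵀ minimizes ‖X − X̃‖_F over all matrices X̃ of rank at most r, and the minimal error is √(∑_{i>r} σᵢ²). -/

import Mathlib

/-!
Orthogonal invariance of the Frobenius norm reduces everything to the rectangular diagonal
matrix `Σ`. If `Z` has rank at most `r`, let `P` be the orthogonal projection onto its column
space `K`. Column by column, `‖Σ - Z‖² ≥ ‖Σ - PΣ‖² = ∑ⱼ σⱼ² (1 - tⱼ)` with `tⱼ = ‖P eⱼ‖² ∈ [0, 1]`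
and `∑ⱼ tⱼ = dim K ≤ r`. Since `σ` is nonincreasing, this weighted sum is smallest when the
whole budget `r` sits on the first `r` indices, which leaves `∑_{j ≥ r} σⱼ²`; the truncated SVD
attains this value.
-/

open Matrix

noncomputable def frobNorm {n m : ℕ} (M : Matrix (Fin n) (Fin m) ℝ) : ℝ :=
  Real.sqrt (∑ i, ∑ j, (M i j) ^ 2)

open Finset Module RealInnerProductSpace

theorem Finset.sum_Ico_le_sum_mul_one_sub_of_antitone {a t : ℕ → ℝ} {r M : ℕ} (ha : Antitone a)
    (ha₀ : ∀ i, 0 ≤ a i) (ht₀ : ∀ i, 0 ≤ t i) (ht₁ : ∀ i, t i ≤ 1)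
    (ht : ∑ i ∈ range M, t i ≤ r) :
    ∑ i ∈ Ico r M, a i ≤ ∑ i ∈ range M, a i * (1 - t i) := by
  rcases le_or_gt M r with hMr | hrM
  · rw [Ico_eq_empty_of_le hMr, sum_empty]
    exact sum_nonneg fun i _ => mul_nonneg (ha₀ i) (sub_nonneg.2 (ht₁ i))
  -- Every weight `a i` is compared with the pivot `a r`.
  have head : a r * ∑ i ∈ range r, (1 - t i) ≤ ∑ i ∈ range r, a i * (1 - t i) := by
    rw [mul_sum]
    gcongr with i hi
    · exact sub_nonneg.2 (ht₁ i)
    · exact ha (mem_range.1 hi).le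
  have tail : ∑ i ∈ Ico r M, a i * t i ≤ a r * ∑ i ∈ Ico r M, t i := by
    rw [mul_sum]
    gcongr with i hi
    · exact ht₀ i
    · exact ha (mem_Ico.1 hi).1
  have pivot : 0 ≤ a r * ∑ i ∈ range r, (1 - t i) - a r * ∑ i ∈ Ico r M, t i := by
    rw [← mul_sub]
    refine mul_nonneg (ha₀ r) ?_
    have := sum_range_add_sum_Ico t hrM.le
    simp only [sum_sub_distrib, sum_const, card_range, nsmul_one]
    linarith
  have hsplit := sum_range_add_sum_Ico (fun i => a i * (1 - t i)) hrM.le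
  have hIco : ∑ i ∈ Ico r M, a i * (1 - t i) = ∑ i ∈ Ico r M, a i - ∑ i ∈ Ico r M, a i * t i := by
    simp only [mul_one_sub, sum_sub_distrib]
  linarith

namespace Submodule

variable {E : Type*} [NormedAddCommGroup E] [InnerProductSpace ℝ E]

theorem norm_sub_starProjection_le (K : Submodule ℝ E) [K.HasOrthogonalProjection] (x : E)
    {w : E} (hw : w ∈ K) : ‖x - K.starProjection x‖ ≤ ‖x - w‖ := by
  rw [starProjection_minimal]
  exact ciInf_le ⟨0, Set.forall_mem_range.2 fun _ => norm_nonneg _⟩ (⟨w, hw⟩ : K)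

theorem norm_sub_starProjection_sq (K : Submodule ℝ E) [K.HasOrthogonalProjection] (x : E) :
    ‖x - K.starProjection x‖ ^ 2 = ‖x‖ ^ 2 - ‖K.starProjection x‖ ^ 2 := by
  rw [K.norm_sq_eq_add_norm_sq_starProjection x, K.starProjection_orthogonal']
  simp

theorem sum_norm_starProjection_sq {ι : Type*} [Fintype ι] (K : Submodule ℝ E)
    [FiniteDimensional ℝ K] (b : OrthonormalBasis ι ℝ E) :
    ∑ i, ‖K.starProjection (b i)‖ ^ 2 = finrank ℝ K := by
  let c := stdOrthonormalBasis ℝ K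
  have parseval (x : E) : ‖K.starProjection x‖ ^ 2 = ∑ k, ⟪(c k : E), x⟫ ^ 2 := by
    rw [starProjection_apply, norm_coe, ← c.sum_sq_inner_right]
    simp only [inner_orthogonalProjectionOnto_eq_of_mem_left]
  calc ∑ i, ‖K.starProjection (b i)‖ ^ 2 = ∑ k, ∑ i, ⟪(c k : E), b i⟫ ^ 2 := by
        simp only [parseval]; exact Finset.sum_comm
    _ = ∑ k, ‖(c k : E)‖ ^ 2 := by simp only [b.sum_sq_inner_left]
    _ = finrank ℝ K := by simp [norm_coe, c.orthonormal.1 _]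

end Submodule

theorem Matrix.sum_sq_eq_trace_transpose_mul {ι κ R : Type*} [Fintype ι] [Fintype κ]
    [CommSemiring R] (A : Matrix ι κ R) : ∑ i, ∑ j, A i j ^ 2 = trace (Aᵀ * A) := by
  rw [Finset.sum_comm]
  simp [trace, mul_apply, sq]

theorem Matrix.sum_sq_eq_sum_norm_toLp_col_sq {ι κ : Type*} [Fintype ι] [Fintype κ]
    (A : Matrix ι κ ℝ) : ∑ i, ∑ j, A i j ^ 2 = ∑ j, ‖WithLp.toLp 2 (A.col j)‖ ^ 2 := by
  simp only [EuclideanSpace.real_norm_sq_eq]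
  exact Finset.sum_comm

-- Indexed by `ℕ`, so that the `j`-th column of an `n × m` matrix can be compared with it for
-- every `j < m`; it is `0` when `j ≥ n`.
noncomputable def natSingle (n j : ℕ) : EuclideanSpace ℝ (Fin n) :=
  if h : j < n then EuclideanSpace.single ⟨j, h⟩ 1 else 0

def rectDiag (n m : ℕ) (d : ℕ → ℝ) : Matrix (Fin n) (Fin m) ℝ :=
  of fun i j => if (i : ℕ) = j then d i else 0

section RectDiag

variable {n m : ℕ}

theorem norm_natSingle_le (j : ℕ) : ‖natSingle n j‖ ≤ 1 := by
  unfold natSingle; split_ifs <;> simp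

theorem natSingle_val (i : Fin n) : natSingle n i = EuclideanSpace.single i 1 := by
  simp [natSingle]

theorem toLp_col_rectDiag (d : ℕ → ℝ) (j : Fin m) :
    WithLp.toLp 2 ((rectDiag n m d).col j) = d j • natSingle n j := by
  ext i
  unfold natSingle
  split_ifs with h
  · simp only [rectDiag, col_apply, of_apply, PiLp.smul_apply, PiLp.single_apply, Fin.ext_iff,
      smul_eq_mul, mul_ite, mul_one, mul_zero]
    split_ifs <;> simp_all
  · simp only [rectDiag, col_apply, of_apply, smul_zero, PiLp.zero_apply, ite_eq_right_iff]
    omega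

theorem sum_sq_rectDiag (d : ℕ → ℝ) :
    ∑ i, ∑ j, rectDiag n m d i j ^ 2 = ∑ i ∈ range (min n m), d i ^ 2 := by
  have row (i : Fin n) : ∑ j, rectDiag n m d i j ^ 2 = if (i : ℕ) < m then d i ^ 2 else 0 := by
    simp only [rectDiag, of_apply, ite_pow]
    rw [Fin.sum_univ_eq_sum_range (fun j => if (i : ℕ) = j then d i ^ 2 else 0 ^ 2)]
    simp
  rw [Fintype.sum_congr _ _ row, Fin.sum_univ_eq_sum_range (fun i => if i < m then d i ^ 2 else 0),
    ← sum_filter]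
  congr 1
  ext i
  simp

theorem frobNorm_mul_mul_transpose {Ψ : Matrix (Fin n) (Fin n) ℝ} {V : Matrix (Fin m) (Fin m) ℝ}
    (hΨ : Ψᵀ * Ψ = 1) (hV : Vᵀ * V = 1) (A : Matrix (Fin n) (Fin m) ℝ) :
    frobNorm (Ψ * A * Vᵀ) = frobNorm A := by
  have h : (Ψ * A * Vᵀ)ᵀ * (Ψ * A * Vᵀ) = V * (Aᵀ * A * Vᵀ) := by
    simp only [transpose_mul, transpose_transpose, Matrix.mul_assoc]
    rw [← Matrix.mul_assoc Ψᵀ, hΨ, Matrix.one_mul]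
  unfold frobNorm
  rw [sum_sq_eq_trace_transpose_mul, sum_sq_eq_trace_transpose_mul, h, trace_mul_comm,
    Matrix.mul_assoc, hV, Matrix.mul_one]

theorem rectDiag_sub_truncation (σ : ℕ → ℝ) (r : ℕ) :
    rectDiag n m σ - of (fun (i : Fin n) (j : Fin m) => if (i : ℕ) = j ∧ (i : ℕ) < r then σ i else 0)
      = rectDiag n m (fun i => if r ≤ i then σ i else 0) := by
  ext i j
  simp only [rectDiag, Matrix.sub_apply, of_apply]
  split_ifs <;> first | (exfalso; omega) | simp

theorem sum_sq_rectDiag_sub_truncation (σ : ℕ → ℝ) (r : ℕ) :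
    ∑ i, ∑ j, (rectDiag n m σ -
      of (fun (i : Fin n) (j : Fin m) => if (i : ℕ) = j ∧ (i : ℕ) < r then σ i else 0)) i j ^ 2
      = ∑ i ∈ Ico r (min n m), σ i ^ 2 := by
  rw [rectDiag_sub_truncation, sum_sq_rectDiag]
  simp only [ite_pow, ne_eq, OfNat.ofNat_ne_zero, not_false_eq_true, zero_pow, ← sum_filter]
  congr 1
  ext i
  simp only [mem_filter, mem_range, lt_inf_iff, mem_Ico]
  omega

theorem sum_Ico_sq_le_sum_sq_rectDiag_sub {σ : ℕ → ℝ} (hσ : Antitone σ) (hσ₀ : ∀ i, 0 ≤ σ i)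
    {r : ℕ} {Z : Matrix (Fin n) (Fin m) ℝ} (hZ : Z.rank ≤ r) :
    ∑ i ∈ Ico r (min n m), σ i ^ 2 ≤ ∑ i, ∑ j, (rectDiag n m σ - Z) i j ^ 2 := by
  let K : Submodule ℝ (EuclideanSpace ℝ (Fin n)) :=
    (Submodule.span ℝ (Set.range Z.col)).map (WithLp.linearEquiv 2 ℝ (Fin n → ℝ)).symm.toLinearMap
  have hK : finrank ℝ K ≤ r := by
    rw [LinearEquiv.finrank_map_eq, ← rank_eq_finrank_span_cols]
    exact hZ
  have hZK (j : Fin m) : WithLp.toLp 2 (Z.col j) ∈ K :=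
    Submodule.mem_map_of_mem (Submodule.subset_span ⟨j, rfl⟩)
  let t : ℕ → ℝ := fun j => ‖K.starProjection (natSingle n j)‖ ^ 2
  have ht₁ (j : ℕ) : t j ≤ 1 :=
    pow_le_one₀ (norm_nonneg _) ((K.norm_starProjection_apply_le _).trans (norm_natSingle_le j))
  have ht : ∑ j ∈ range (min n m), t j ≤ r := calc
    ∑ j ∈ range (min n m), t j ≤ ∑ j ∈ range n, t j :=
      sum_le_sum_of_subset_of_nonneg (range_subset_range.2 (min_le_left n m))
        fun j _ _ => sq_nonneg _
    _ = finrank ℝ K := by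
      rw [← Fin.sum_univ_eq_sum_range, ← K.sum_norm_starProjection_sq (EuclideanSpace.basisFun _ ℝ)]
      simp [t, natSingle_val]
    _ ≤ r := by exact_mod_cast hK
  let resid : ℕ → ℝ := fun j => ‖σ j • natSingle n j - K.starProjection (σ j • natSingle n j)‖ ^ 2
  have hresid (j : ℕ) (hj : j < n) : resid j = σ j ^ 2 * (1 - t j) := by
    simp only [resid, t, map_smul, ← smul_sub, norm_smul, mul_pow, K.norm_sub_starProjection_sq]
    simp [natSingle, hj]
  calc ∑ i ∈ Ico r (min n m), σ i ^ 2
      ≤ ∑ j ∈ range (min n m), σ j ^ 2 * (1 - t j) :=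
        sum_Ico_le_sum_mul_one_sub_of_antitone (fun i j h => pow_le_pow_left₀ (hσ₀ j) (hσ h) 2)
          (fun i => sq_nonneg _) (fun j => sq_nonneg _) ht₁ ht
    _ = ∑ j ∈ range (min n m), resid j :=
        sum_congr rfl fun j hj => (hresid j (lt_min_iff.1 (mem_range.1 hj)).1).symm
    _ ≤ ∑ j ∈ range m, resid j :=
        sum_le_sum_of_subset_of_nonneg (range_subset_range.2 (min_le_right n m))
          fun j _ _ => sq_nonneg _
    _ = ∑ j : Fin m, resid j := (Fin.sum_univ_eq_sum_range resid m).symm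
    _ ≤ ∑ j : Fin m, ‖σ j • natSingle n j - WithLp.toLp 2 (Z.col j)‖ ^ 2 := by
        exact sum_le_sum fun j _ =>
          pow_le_pow_left₀ (norm_nonneg _) (K.norm_sub_starProjection_le _ (hZK j)) 2
    _ = ∑ i, ∑ j, (rectDiag n m σ - Z) i j ^ 2 := by
        rw [sum_sq_eq_sum_norm_toLp_col_sq]
        simp only [← toLp_col_rectDiag]
        rfl

end RectDiag

theorem stmt14_general {n m : ℕ} (X : Matrix (Fin n) (Fin m) ℝ)
    (Ψ : Matrix (Fin n) (Fin n) ℝ) (V : Matrix (Fin m) (Fin m) ℝ) (σ : ℕ → ℝ)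
    (hΨ : Ψᵀ * Ψ = 1) (hV : Vᵀ * V = 1)
    (hmono : Antitone σ) (hpos : ∀ i, 0 ≤ σ i)
    (hX : X = Ψ * (Matrix.of fun (i : Fin n) (j : Fin m) =>
      if (i : ℕ) = (j : ℕ) then σ i else 0) * Vᵀ)
    (r : ℕ)
    (Xr : Matrix (Fin n) (Fin m) ℝ)
    (hXr : Xr = Ψ * (Matrix.of fun (i : Fin n) (j : Fin m) =>
      if (i : ℕ) = (j : ℕ) ∧ (i : ℕ) < r then σ i else 0) * Vᵀ) :
    (∀ Y : Matrix (Fin n) (Fin m) ℝ, Y.rank ≤ r → frobNorm (X - Xr) ≤ frobNorm (X - Y)) ∧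
      frobNorm (X - Xr) = Real.sqrt (∑ i ∈ Finset.Ico r (min n m), (σ i) ^ 2) := by
  change X = Ψ * rectDiag n m σ * Vᵀ at hX
  have herr : frobNorm (X - Xr) = √(∑ i ∈ Ico r (min n m), σ i ^ 2) := by
    rw [hX, hXr, ← Matrix.sub_mul, ← Matrix.mul_sub, frobNorm_mul_mul_transpose hΨ hV, frobNorm,
      sum_sq_rectDiag_sub_truncation]
  refine ⟨fun Y hY => ?_, herr⟩
  let Z := Ψᵀ * Y * V
  have hZ : Z.rank ≤ r := ((rank_mul_le_left _ _).trans (rank_mul_le_right _ _)).trans hY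
  have hYZ : Y = Ψ * Z * Vᵀ := by
    simp only [Z, Matrix.mul_assoc, mul_eq_one_comm.mp hV, Matrix.mul_one]
    rw [← Matrix.mul_assoc, mul_eq_one_comm.mp hΨ, Matrix.one_mul]
  rw [herr, hX, hYZ, ← Matrix.sub_mul, ← Matrix.mul_sub, frobNorm_mul_mul_transpose hΨ hV]
  exact Real.sqrt_le_sqrt (sum_Ico_sq_le_sum_sq_rectDiag_sub hmono hpos hZ)

/-- Eckart–Young, Frobenius norm: given an SVD X = ΨΣVᵀ with nonincreasing
nonnegative singular values σ, the rank-r truncation X_r = Ψ Σ_r Vᵀ minimizes ‖X − X̃‖_F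
over matrices X̃ of rank at most r, with minimal error √(∑_{i ≥ r} σᵢ²). -/
theorem stmt14 {n m : ℕ} (X : Matrix (Fin n) (Fin m) ℝ)
    (Ψ : Matrix (Fin n) (Fin n) ℝ) (V : Matrix (Fin m) (Fin m) ℝ) (σ : ℕ → ℝ)
    (hΨ : Ψᵀ * Ψ = 1) (hV : Vᵀ * V = 1)
    (hmono : Antitone σ) (hpos : ∀ i, 0 ≤ σ i) (hzero : ∀ i, min n m ≤ i → σ i = 0)
    (hX : X = Ψ * (Matrix.of fun (i : Fin n) (j : Fin m) =>
      if (i : ℕ) = (j : ℕ) then σ i else 0) * Vᵀ)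
    (r : ℕ)
    (Xr : Matrix (Fin n) (Fin m) ℝ)
    (hXr : Xr = Ψ * (Matrix.of fun (i : Fin n) (j : Fin m) =>
      if (i : ℕ) = (j : ℕ) ∧ (i : ℕ) < r then σ i else 0) * Vᵀ) :
    (∀ Y : Matrix (Fin n) (Fin m) ℝ, Y.rank ≤ r → frobNorm (X - Xr) ≤ frobNorm (X - Y)) ∧
      frobNorm (X - Xr) = Real.sqrt (∑ i ∈ Finset.Ico r (min n m), (σ i) ^ 2) :=
  stmt14_general X Ψ V σ hΨ hV hmono hpos hX r Xr hXr
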